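/- There exist constants δ ∈ (0,1] and c₀ > 0 such that: for all smooth maps η, u : ℝ² → ℝ², 2-periodic in each variable, both satisfying the odevity conditions (first component even in y₂, second component odd in y₂), with det(I + ∇η) = 1, ‖∂₂η‖₂ ≤ δ, and div_𝒜 u = 0 where 𝒜 = (∇(η + id))^{-T}, one has ‖∂₁u‖_{L^∞} ≤ c₀ ‖∂₂u‖₂ and ‖∂₂u‖_{L^∞} ≤ c₀ ‖∂₂²u‖₁, where the L^∞ norms are taken over the periodic cell (-1,1)². -/

import Mathlib

open MeasureTheory

noncomputable section

/-- A point of the plane `ℝ²`. -/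
abbrev Pt := ℝ × ℝ

/-- The periodic cell `(-1,1)²`. -/
def cell : Set Pt := Set.Ioo (-1 : ℝ) 1 ×ˢ Set.Ioo (-1 : ℝ) 1

/-- `f` is 2-periodic in each variable. -/
def Periodic2 (f : Pt → ℝ) : Prop :=
  (∀ y : Pt, f (y.1 + 2, y.2) = f y) ∧ ∀ y : Pt, f (y.1, y.2 + 2) = f y

/-- Partial derivative in the first variable. -/
def p1 (f : Pt → ℝ) : Pt → ℝ := fun y => fderiv ℝ f y (1, 0)

/-- Partial derivative in the second variable. -/
def p2 (f : Pt → ℝ) : Pt → ℝ := fun y => fderiv ℝ f y (0, 1)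

/-- Iterated partial derivative `∂₁^a ∂₂^b f`. -/
def pd (a b : ℕ) (f : Pt → ℝ) : Pt → ℝ := p1^[a] (p2^[b] f)

/-- Square of the `L²((-1,1)²)` norm. -/
def L2sq (f : Pt → ℝ) : ℝ := ∫ y in cell, (f y) ^ 2

/-- The `L²((-1,1)²)` norm `‖f‖₀`. -/
def L2 (f : Pt → ℝ) : ℝ := Real.sqrt (L2sq f)

/-- Square of the Sobolev norm `‖f‖_i² = Σ_{|α| ≤ i} ‖∂^α f‖₀²`. -/
def sobSq (i : ℕ) (f : Pt → ℝ) : ℝ :=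
  ∑ a ∈ Finset.range (i + 1), ∑ b ∈ Finset.range (i + 1 - a), L2sq (pd a b f)

/-- The Sobolev norm `‖f‖_i`. -/
def sob (i : ℕ) (f : Pt → ℝ) : ℝ := Real.sqrt (sobSq i f)

/-- Square of the homogeneous seminorm `‖∇^i f‖₀² = Σ_{|α| = i} ‖∂^α f‖₀²`. -/
def gradSq (i : ℕ) (f : Pt → ℝ) : ℝ :=
  ∑ a ∈ Finset.range (i + 1), L2sq (pd a (i - a) f)

/-- First component of a map `ℝ² → ℝ²`. -/
def comp1 (v : Pt → Pt) : Pt → ℝ := fun y => (v y).1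

/-- Second component of a map `ℝ² → ℝ²`. -/
def comp2 (v : Pt → Pt) : Pt → ℝ := fun y => (v y).2

/-- The odevity conditions: the first component is even in `y₂`, the second is odd. -/
def Odev (v : Pt → Pt) : Prop :=
  ∀ y : Pt, (v (y.1, -y.2)).1 = (v y).1 ∧ (v (y.1, -y.2)).2 = -(v y).2

/-- The incompressibility condition `det(I + ∇η) = 1`. -/
def DetCond (η : Pt → Pt) : Prop :=
  ∀ y : Pt, (1 + p1 (comp1 η) y) * (1 + p2 (comp2 η) y)
      - p2 (comp1 η) y * p1 (comp2 η) y = 1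

/-- Sobolev norm `‖v‖_i` of a vector field (components summed). -/
def sobV (i : ℕ) (v : Pt → Pt) : ℝ := Real.sqrt (sobSq i (comp1 v) + sobSq i (comp2 v))

/-- The vector field `∂₂v`. -/
def d2V (v : Pt → Pt) : Pt → Pt := fun y => (p2 (comp1 v) y, p2 (comp2 v) y)

/-- The condition `div_𝒜 u = 0`, where `𝒜 = (∇(η + id))^{-T}` in cofactor form
(valid when `det(I + ∇η) = 1`):
`𝒜 = [[1 + ∂₂η₂, −∂₁η₂], [−∂₂η₁, 1 + ∂₁η₁]]`. -/
def DivACond (η u : Pt → Pt) : Prop :=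
  ∀ y : Pt,
    (1 + p2 (comp2 η) y) * p1 (comp1 u) y - p1 (comp2 η) y * p2 (comp1 u) y
      - p2 (comp1 η) y * p1 (comp2 u) y + (1 + p1 (comp1 η) y) * p2 (comp2 u) y = 0

/-!
On every vertical segment of the cell, `∂₂u₁` and `∂₁u₂` vanish at `y₂ = 0` by the odevity
conditions, and `∂₂u₂` vanishes between `y₂ = 0` and `y₂ = 1` by Rolle, since `u₂` vanishes on
both lines by oddness and periodicity. A function `f` with such a zero on every vertical segment
satisfies `|f| ≤ ‖∂₂f‖₀ + 2‖∂₁∂₂f‖₀` on the cell: integrate `∂₂f` vertically from the zero,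
bound `|∂₂f|` on a horizontal line by its average plus `∫|∂₁∂₂f|`, and integrate over the cell
with Cauchy–Schwarz. This bounds `∂₂u₁`, `∂₁u₂`, `∂₂u₂` (and the same derivatives of `η`).
The remaining `∂₁u₁` is solved for from `div_𝒜 u = 0`: for small `∂₂η` its coefficient
`1 + ∂₂η₂` stays near `1`, and `det(I + ∇η) = 1` keeps `1 + ∂₁η₁` bounded.
-/

open Set

section Partials

variable {f : Pt → ℝ}

theorem hasDerivAt_p1 (hf : Differentiable ℝ f) (s t : ℝ) :
    HasDerivAt (fun r => f (r, t)) (p1 f (s, t)) s := by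
  have h := (hf (s, t)).hasFDerivAt.comp_hasDerivAt s
    ((hasDerivAt_id s).prodMk (hasDerivAt_const s t))
  simpa [p1, Function.comp_def] using h

theorem hasDerivAt_p2 (hf : Differentiable ℝ f) (s t : ℝ) :
    HasDerivAt (fun r => f (s, r)) (p2 f (s, t)) t := by
  have h := (hf (s, t)).hasFDerivAt.comp_hasDerivAt t
    ((hasDerivAt_const t s).prodMk (hasDerivAt_id t))
  simpa [p2, Function.comp_def] using h

theorem ContDiff.p1 {m n : WithTop ℕ∞} (hf : ContDiff ℝ n f) (hmn : m + 1 ≤ n) :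
    ContDiff ℝ m (p1 f) :=
  (hf.fderiv_right hmn).clm_apply contDiff_const

theorem ContDiff.p2 {m n : WithTop ℕ∞} (hf : ContDiff ℝ n f) (hmn : m + 1 ≤ n) :
    ContDiff ℝ m (p2 f) :=
  (hf.fderiv_right hmn).clm_apply contDiff_const

theorem p1_p2_comm (hf : ContDiff ℝ 2 f) : p1 (p2 f) = p2 (p1 f) := by
  have hdf : Differentiable ℝ (fderiv ℝ f) :=
    (hf.fderiv_right le_rfl).differentiable one_ne_zero
  have hpartial (y v w : Pt) :
      fderiv ℝ (fun z => fderiv ℝ f z w) y v = fderiv ℝ (fderiv ℝ f) y v w := by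
    rw [fderiv_clm_apply (hdf y) (differentiableAt_const w)]
    simp
  funext y
  change fderiv ℝ (fun z => fderiv ℝ f z (0, 1)) y (1, 0)
    = fderiv ℝ (fun z => fderiv ℝ f z (1, 0)) y (0, 1)
  rw [hpartial, hpartial]
  exact (hf.contDiffAt.isSymmSndFDerivAt (by simp)) _ _

end Partials

section Interval

open intervalIntegral

variable {φ φ' : ℝ → ℝ} {a b : ℝ}

theorem abs_sub_le_integral_abs_deriv (hφ : ∀ t, HasDerivAt φ (φ' t) t)
    (hφ' : Continuous φ') {x s : ℝ} (hx : x ∈ Icc a b) (hs : s ∈ Icc a b) :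
    |φ x - φ s| ≤ ∫ t in a..b, |φ' t| := by
  have hab : uIcc a b = Icc a b := uIcc_of_le (hx.1.trans hx.2)
  rw [← integral_eq_sub_of_hasDerivAt (fun t _ => hφ t) (hφ'.intervalIntegrable s x)]
  calc |∫ t in s..x, φ' t| ≤ |(∫ t in s..x, |φ' t|)| := by
        simpa only [Real.norm_eq_abs] using
          norm_integral_le_abs_integral_norm (f := φ') (μ := volume)
    _ ≤ |(∫ t in a..b, |φ' t|)| :=
        abs_integral_mono_interval
          (uIoc_subset_uIoc_of_uIcc_subset_uIcc (uIcc_subset_uIcc (hab ▸ hs) (hab ▸ hx)))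
          (Filter.Eventually.of_forall fun t => abs_nonneg _) (hφ'.abs.intervalIntegrable a b)
    _ = ∫ t in a..b, |φ' t| :=
        abs_of_nonneg (integral_nonneg (hx.1.trans hx.2) fun t _ => abs_nonneg _)

theorem abs_le_integral_abs_deriv_of_eq_zero (hφ : ∀ t, HasDerivAt φ (φ' t) t)
    (hφ' : Continuous φ') {x s : ℝ} (hx : x ∈ Icc a b) (hs : s ∈ Icc a b) (hφs : φ s = 0) :
    |φ x| ≤ ∫ t in a..b, |φ' t| := by
  simpa [hφs] using abs_sub_le_integral_abs_deriv hφ hφ' hx hs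

theorem mul_abs_le_integral_abs_add_mul_integral_abs_deriv
    (hφ : ∀ t, HasDerivAt φ (φ' t) t) (hφ' : Continuous φ') {x : ℝ} (hx : x ∈ Icc a b) :
    (b - a) * |φ x| ≤ (∫ t in a..b, |φ t|) + (b - a) * ∫ t in a..b, |φ' t| := by
  have hab : a ≤ b := hx.1.trans hx.2
  have hφc : Continuous φ := continuous_iff_continuousAt.2 fun t => (hφ t).continuousAt
  set C := ∫ t in a..b, |φ' t|
  have key : ∫ _ in a..b, |φ x| ≤ ∫ s in a..b, (|φ s| + C) :=
    integral_mono_on hab intervalIntegrable_const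
      ((hφc.abs.add continuous_const).intervalIntegrable a b) fun s hs => by
        linarith [abs_sub_abs_le_abs_sub (φ x) (φ s), abs_sub_le_integral_abs_deriv hφ hφ' hx hs]
  rwa [intervalIntegral.integral_const,
    integral_add (hφc.abs.intervalIntegrable a b) (intervalIntegrable_const (μ := volume)),
    intervalIntegral.integral_const, smul_eq_mul, smul_eq_mul] at key

end Interval

theorem sq_integral_abs_le_measureReal_mul_integral_sq {α : Type*} [MeasurableSpace α]
    {μ : Measure α} [IsFiniteMeasure μ] {φ : α → ℝ} (hφ : MemLp φ 2 μ) :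
    (∫ x, |φ x| ∂μ) ^ 2 ≤ μ.real univ * ∫ x, φ x ^ 2 ∂μ := by
  have hφ1 : Integrable (fun x => |φ x|) μ := (hφ.integrable one_le_two).abs
  have hφ2 : Integrable (fun x => φ x ^ 2) μ := hφ.integrable_sq
  have hquad : ∀ t : ℝ, 0 ≤ μ.real univ * (t * t) + (-2 * ∫ x, |φ x| ∂μ) * t
      + ∫ x, φ x ^ 2 ∂μ := fun t => by
    have hexp : ∫ x, (|φ x| - t) ^ 2 ∂μ
        = μ.real univ * (t * t) + (-2 * ∫ x, |φ x| ∂μ) * t + ∫ x, φ x ^ 2 ∂μ := by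
      have hpt : (fun x => (|φ x| - t) ^ 2) = fun x => φ x ^ 2 - 2 * t * |φ x| + t ^ 2 := by
        funext x; rw [← sq_abs (φ x)]; ring
      rw [hpt, integral_add (f := fun x => φ x ^ 2 - 2 * t * |φ x|)
          (hφ2.sub (hφ1.const_mul _)) (integrable_const _),
        integral_sub (f := fun x => φ x ^ 2) hφ2 (hφ1.const_mul _), integral_const_mul,
        integral_const, smul_eq_mul]
      ring
    exact hexp ▸ integral_nonneg fun x => sq_nonneg _
  have := discrim_le_zero hquad
  rw [discrim] at this
  linarith

theorem L2sq_nonneg (f : Pt → ℝ) : 0 ≤ L2sq f :=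
  integral_nonneg fun _ => sq_nonneg _

theorem Continuous.integrableOn_cell {h : Pt → ℝ} (hh : Continuous h) : IntegrableOn h cell :=
  (hh.continuousOn.integrableOn_compact (isCompact_Icc.prod isCompact_Icc)).mono_set
    (prod_mono Ioo_subset_Icc_self Ioo_subset_Icc_self)

theorem integral_cell_eq_integral_integral {h : Pt → ℝ} (hh : IntegrableOn h cell) :
    ∫ z in cell, h z = ∫ t in (-1 : ℝ)..1, ∫ s in (-1 : ℝ)..1, h (s, t) := by
  have hIoo (g : ℝ → ℝ) : ∫ t in (-1 : ℝ)..1, g t = ∫ t in Ioo (-1 : ℝ) 1, g t := by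
    rw [intervalIntegral.integral_of_le (by norm_num), integral_Ioc_eq_integral_Ioo]
  rw [cell, Measure.volume_eq_prod, ← setIntegral_prod_swap, setIntegral_prod]
  · simp only [Prod.swap_prod_mk, hIoo]
  · rw [cell, Measure.volume_eq_prod, IntegrableOn, ← Measure.prod_restrict] at hh
    rw [IntegrableOn, ← Measure.prod_restrict]
    exact hh.swap

theorem integral_cell_abs_le_two_mul_L2 {h : Pt → ℝ} (hh : Continuous h) :
    ∫ z in cell, |h z| ≤ 2 * L2 h := by
  have hcell : volume cell = 4 := by
    rw [cell, Measure.volume_eq_prod, Measure.prod_prod, Real.volume_Ioo,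
      ← ENNReal.ofReal_mul (by norm_num)]
    norm_num
  have : IsFiniteMeasure (volume.restrict cell) := isFiniteMeasure_restrict.2 (by simp [hcell])
  have hcs := sq_integral_abs_le_measureReal_mul_integral_sq
    ((memLp_two_iff_integrable_sq hh.aestronglyMeasurable).2 (hh.pow 2).integrableOn_cell)
  rw [measureReal_restrict_apply_univ, measureReal_def, hcell] at hcs
  norm_num at hcs
  have hI : 0 ≤ ∫ z in cell, |h z| := integral_nonneg fun z => abs_nonneg (h z)
  have hQ := Real.sq_sqrt (L2sq_nonneg h)
  rw [L2sq] at hQ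
  rw [L2, L2sq]
  nlinarith [Real.sqrt_nonneg (∫ z in cell, h z ^ 2)]

theorem integral_integral_abs_le_two_mul_L2 {h : Pt → ℝ} (hh : Continuous h) :
    ∫ t in (-1 : ℝ)..1, ∫ s in (-1 : ℝ)..1, |h (s, t)| ≤ 2 * L2 h := by
  rw [← integral_cell_eq_integral_integral hh.abs.integrableOn_cell]
  exact integral_cell_abs_le_two_mul_L2 hh

theorem abs_le_L2_p2_add_two_mul_L2_p1_p2 {f : Pt → ℝ} (hf : ContDiff ℝ 2 f)
    (hzero : ∀ x, ∃ s ∈ Icc (-1 : ℝ) 1, f (x, s) = 0) {y : Pt} (hy : y ∈ cell) :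
    |f y| ≤ L2 (p2 f) + 2 * L2 (p1 (p2 f)) := by
  set g := p2 f
  have hg : ContDiff ℝ 1 g := hf.p2 (by norm_num)
  have hgc : Continuous g := hg.continuous
  have hg1c : Continuous (p1 g) := (hg.p1 (m := 0) (by norm_num)).continuous
  have hy1 : y.1 ∈ Icc (-1 : ℝ) 1 := Ioo_subset_Icc_self hy.1
  have hy2 : y.2 ∈ Icc (-1 : ℝ) 1 := Ioo_subset_Icc_self hy.2
  obtain ⟨s, hs, hfs⟩ := hzero y.1
  have hvert : |f y| ≤ ∫ t in (-1 : ℝ)..1, |g (y.1, t)| :=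
    abs_le_integral_abs_deriv_of_eq_zero (hasDerivAt_p2 (hf.differentiable two_ne_zero) y.1)
      (hgc.comp (Continuous.prodMk_right y.1)) hy2 hs hfs
  have hhor (t : ℝ) : 2 * |g (y.1, t)|
      ≤ (∫ s in (-1 : ℝ)..1, |g (s, t)|) + 2 * ∫ r in (-1 : ℝ)..1, |p1 g (r, t)| := by
    have := mul_abs_le_integral_abs_add_mul_integral_abs_deriv
      (fun r => hasDerivAt_p1 (hg.differentiable one_ne_zero) r t)
      (hg1c.comp (continuous_id.prodMk continuous_const)) hy1
    norm_num at this
    exact this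
  have hint : 2 * ∫ t in (-1 : ℝ)..1, |g (y.1, t)|
      ≤ (∫ t in (-1 : ℝ)..1, ∫ s in (-1 : ℝ)..1, |g (s, t)|)
        + 2 * ∫ t in (-1 : ℝ)..1, ∫ r in (-1 : ℝ)..1, |p1 g (r, t)| := by
    have hc1 : Continuous fun t => ∫ s in (-1 : ℝ)..1, |g (s, t)| := by fun_prop
    have hc2 : Continuous fun t => ∫ r in (-1 : ℝ)..1, |p1 g (r, t)| := by fun_prop
    rw [← intervalIntegral.integral_const_mul, ← intervalIntegral.integral_const_mul,
      ← intervalIntegral.integral_add (hc1.intervalIntegrable _ _)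
        ((hc2.const_mul 2).intervalIntegrable _ _)]
    exact intervalIntegral.integral_mono_on (by norm_num)
      ((hgc.comp (Continuous.prodMk_right y.1)).abs.const_mul 2 |>.intervalIntegrable _ _)
      ((hc1.add (hc2.const_mul 2)).intervalIntegrable _ _) fun t _ => hhor t
  linarith [integral_integral_abs_le_two_mul_L2 hgc, integral_integral_abs_le_two_mul_L2 hg1c]

theorem sobSq_nonneg (i : ℕ) (f : Pt → ℝ) : 0 ≤ sobSq i f :=
  Finset.sum_nonneg fun _ _ => Finset.sum_nonneg fun _ _ => L2sq_nonneg _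

theorem L2_pd_le_sob {a b i : ℕ} (hab : a + b ≤ i) (f : Pt → ℝ) :
    L2 (pd a b f) ≤ sob i f := by
  refine Real.sqrt_le_sqrt ?_
  calc L2sq (pd a b f) ≤ ∑ b' ∈ Finset.range (i + 1 - a), L2sq (pd a b' f) :=
        Finset.single_le_sum (f := fun b' => L2sq (pd a b' f)) (fun _ _ => L2sq_nonneg _)
          (Finset.mem_range.2 (by omega))
    _ ≤ sobSq i f :=
        Finset.single_le_sum
          (f := fun a' => ∑ b' ∈ Finset.range (i + 1 - a'), L2sq (pd a' b' f))
          (fun _ _ => Finset.sum_nonneg fun _ _ => L2sq_nonneg _)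
          (Finset.mem_range.2 (by omega))

theorem sob_comp1_le_sobV (i : ℕ) (v : Pt → Pt) : sob i (comp1 v) ≤ sobV i v :=
  Real.sqrt_le_sqrt (le_add_of_nonneg_right (sobSq_nonneg _ _))

theorem sob_comp2_le_sobV (i : ℕ) (v : Pt → Pt) : sob i (comp2 v) ≤ sobV i v :=
  Real.sqrt_le_sqrt (le_add_of_nonneg_left (sobSq_nonneg _ _))

theorem abs_le_three_mul_of_L2_le {f : Pt → ℝ} (hf : ContDiff ℝ 2 f)
    (hzero : ∀ x, ∃ s ∈ Icc (-1 : ℝ) 1, f (x, s) = 0) {y : Pt} (hy : y ∈ cell) {S : ℝ}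
    (h₁ : L2 (p2 f) ≤ S) (h₂ : L2 (p1 (p2 f)) ≤ S) : |f y| ≤ 3 * S := by
  linarith [abs_le_L2_p2_add_two_mul_L2_p1_p2 hf hzero hy]

section VerticalZeros

variable {g : Pt → ℝ} {y : Pt}

theorem abs_p2_le_three_mul_sob_two (hg : ContDiff ℝ 3 g) (hy : y ∈ cell)
    (hzero : ∀ x, ∃ s ∈ Icc (-1 : ℝ) 1, p2 g (x, s) = 0) :
    |p2 g y| ≤ 3 * sob 2 (p2 g) :=
  abs_le_three_mul_of_L2_le (hg.p2 (by norm_num)) hzero hy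
    (L2_pd_le_sob (a := 0) (b := 1) (by norm_num) _) (L2_pd_le_sob (a := 1) (b := 1) le_rfl _)

theorem abs_p2_le_three_mul_sob_one (hg : ContDiff ℝ 3 g) (hy : y ∈ cell)
    (hzero : ∀ x, ∃ s ∈ Icc (-1 : ℝ) 1, p2 g (x, s) = 0) :
    |p2 g y| ≤ 3 * sob 1 (p2 (p2 g)) :=
  abs_le_three_mul_of_L2_le (hg.p2 (by norm_num)) hzero hy
    (L2_pd_le_sob (a := 0) (b := 0) (by norm_num) _) (L2_pd_le_sob (a := 1) (b := 0) le_rfl _)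

theorem abs_p1_le_three_mul_sob_two (hg : ContDiff ℝ 3 g) (hy : y ∈ cell)
    (hzero : ∀ x, ∃ s ∈ Icc (-1 : ℝ) 1, p1 g (x, s) = 0) :
    |p1 g y| ≤ 3 * sob 2 (p2 g) := by
  have hcomm : p2 (p1 g) = p1 (p2 g) := (p1_p2_comm (hg.of_le (by norm_num))).symm
  refine abs_le_three_mul_of_L2_le (hg.p1 (by norm_num)) hzero hy ?_ ?_ <;> rw [hcomm]
  exacts [L2_pd_le_sob (a := 1) (b := 0) (by norm_num) _, L2_pd_le_sob (a := 2) (b := 0) le_rfl _]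

end VerticalZeros

section Zeros

variable {f : Pt → ℝ}

theorem p2_eq_zero_of_even (hf : Differentiable ℝ f) (heven : ∀ s t, f (s, -t) = f (s, t))
    (x : ℝ) : p2 f (x, 0) = 0 := by
  have hd : deriv (fun t => f (x, t)) 0 = p2 f (x, 0) := (hasDerivAt_p2 hf x 0).deriv
  have hneg := deriv_comp_neg (f := fun t => f (x, t)) (x := 0)
  simp only [heven, neg_zero] at hneg
  linarith

theorem p1_eq_zero_of_forall_eq_zero (hf : Differentiable ℝ f) (hzero : ∀ s, f (s, 0) = 0)
    (x : ℝ) : p1 f (x, 0) = 0 := by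
  have hd := hasDerivAt_p1 hf x 0
  simp only [hzero] at hd
  exact hd.unique (hasDerivAt_const x 0)

theorem exists_p2_eq_zero (hf : Differentiable ℝ f) {x a b : ℝ} (hab : a < b)
    (heq : f (x, a) = f (x, b)) : ∃ c ∈ Ioo a b, p2 f (x, c) = 0 :=
  exists_hasDerivAt_eq_zero hab (hf.continuous.comp (Continuous.prodMk_right x)).continuousOn heq
    fun t _ => hasDerivAt_p2 hf x t

end Zeros

namespace Odev

variable {v : Pt → Pt} {y : Pt}

theorem comp2_eq_zero (ho : Odev v) (x : ℝ) : comp2 v (x, 0) = 0 := by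
  have h := (ho (x, 0)).2
  simp only [neg_zero] at h
  exact CharZero.eq_neg_self_iff.1 h

theorem comp2_eq_zero_of_periodic (ho : Odev v) (hp : Periodic2 (comp2 v)) (x : ℝ) :
    comp2 v (x, 1) = 0 := by
  have hodd : comp2 v (x, -1) = -comp2 v (x, 1) := (ho (x, 1)).2
  have hper : comp2 v (x, -1 + 2) = comp2 v (x, -1) := hp.2 (x, -1)
  norm_num at hper
  linarith

theorem exists_p2_comp1_eq_zero (ho : Odev v) (hv : Differentiable ℝ v) (x : ℝ) :
    ∃ s ∈ Icc (-1 : ℝ) 1, p2 (comp1 v) (x, s) = 0 :=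
  ⟨0, by norm_num, p2_eq_zero_of_even hv.fst (fun s t => (ho (s, t)).1) x⟩

theorem exists_p1_comp2_eq_zero (ho : Odev v) (hv : Differentiable ℝ v) (x : ℝ) :
    ∃ s ∈ Icc (-1 : ℝ) 1, p1 (comp2 v) (x, s) = 0 :=
  ⟨0, by norm_num, p1_eq_zero_of_forall_eq_zero hv.snd ho.comp2_eq_zero x⟩

theorem exists_p2_comp2_eq_zero (ho : Odev v) (hp : Periodic2 (comp2 v))
    (hv : Differentiable ℝ v) (x : ℝ) : ∃ s ∈ Icc (-1 : ℝ) 1, p2 (comp2 v) (x, s) = 0 := by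
  obtain ⟨c, hc, hc0⟩ := exists_p2_eq_zero hv.snd zero_lt_one
    ((ho.comp2_eq_zero x).trans (ho.comp2_eq_zero_of_periodic hp x).symm)
  exact ⟨c, ⟨by linarith [hc.1], hc.2.le⟩, hc0⟩

theorem abs_p2_comp1_le (ho : Odev v) (hv : ContDiff ℝ 3 v) (hy : y ∈ cell) :
    |p2 (comp1 v) y| ≤ 3 * sobV 2 (d2V v) :=
  (abs_p2_le_three_mul_sob_two hv.fst hy
    (ho.exists_p2_comp1_eq_zero (hv.differentiable (by norm_num)))).trans
      (mul_le_mul_of_nonneg_left (sob_comp1_le_sobV 2 (d2V v)) zero_le_three)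

theorem abs_p2_comp2_le (ho : Odev v) (hp : Periodic2 (comp2 v)) (hv : ContDiff ℝ 3 v)
    (hy : y ∈ cell) : |p2 (comp2 v) y| ≤ 3 * sobV 2 (d2V v) :=
  (abs_p2_le_three_mul_sob_two hv.snd hy
    (ho.exists_p2_comp2_eq_zero hp (hv.differentiable (by norm_num)))).trans
      (mul_le_mul_of_nonneg_left (sob_comp2_le_sobV 2 (d2V v)) zero_le_three)

theorem abs_p1_comp2_le (ho : Odev v) (hv : ContDiff ℝ 3 v) (hy : y ∈ cell) :
    |p1 (comp2 v) y| ≤ 3 * sobV 2 (d2V v) :=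
  (abs_p1_le_three_mul_sob_two hv.snd hy
    (ho.exists_p1_comp2_eq_zero (hv.differentiable (by norm_num)))).trans
      (mul_le_mul_of_nonneg_left (sob_comp2_le_sobV 2 (d2V v)) zero_le_three)

theorem abs_p2_comp1_le_sobV_one (ho : Odev v) (hv : ContDiff ℝ 3 v) (hy : y ∈ cell) :
    |p2 (comp1 v) y| ≤ 3 * sobV 1 (d2V (d2V v)) :=
  (abs_p2_le_three_mul_sob_one hv.fst hy
    (ho.exists_p2_comp1_eq_zero (hv.differentiable (by norm_num)))).trans
      (mul_le_mul_of_nonneg_left (sob_comp1_le_sobV 1 (d2V (d2V v))) zero_le_three)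

theorem abs_p2_comp2_le_sobV_one (ho : Odev v) (hp : Periodic2 (comp2 v))
    (hv : ContDiff ℝ 3 v) (hy : y ∈ cell) : |p2 (comp2 v) y| ≤ 3 * sobV 1 (d2V (d2V v)) :=
  (abs_p2_le_three_mul_sob_one hv.snd hy
    (ho.exists_p2_comp2_eq_zero hp (hv.differentiable (by norm_num)))).trans
      (mul_le_mul_of_nonneg_left (sob_comp2_le_sobV 1 (d2V (d2V v))) zero_le_three)

end Odev

/-- With `eᵢⱼ = ∂ⱼηᵢ` and `(a, b, c, d) = (∂₁u₁, ∂₂u₁, ∂₁u₂, ∂₂u₂)`, the hypotheses are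
`det(I + ∇η) = 1` and `div_𝒜 u = 0` at a point. -/
theorem abs_le_of_cofactor_eq_zero {a b c d e₁₁ e₁₂ e₂₁ e₂₂ S : ℝ}
    (he₁₂ : |e₁₂| ≤ 1 / 4) (he₂₁ : |e₂₁| ≤ 1 / 4) (he₂₂ : |e₂₂| ≤ 1 / 4)
    (hb : |b| ≤ S) (hc : |c| ≤ S) (hd : |d| ≤ S)
    (hdet : (1 + e₁₁) * (1 + e₂₂) - e₁₂ * e₂₁ = 1)
    (hdiv : (1 + e₂₂) * a - e₂₁ * b - e₁₂ * c + (1 + e₁₁) * d = 0) :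
    |a| ≤ 3 * S := by
  have h₂₂ : 3 / 4 ≤ |1 + e₂₂| := by
    rw [abs_of_pos (by linarith [neg_abs_le e₂₂])]; linarith [neg_abs_le e₂₂]
  have h₁₂₂₁ : |e₁₂ * e₂₁| ≤ 1 / 16 := by
    rw [abs_mul]; nlinarith [abs_nonneg e₁₂, abs_nonneg e₂₁]
  have h₁₁ : |1 + e₁₁| ≤ 17 / 12 := by
    have hprod : |1 + e₁₁| * |1 + e₂₂| ≤ 17 / 16 := by
      rw [← abs_mul, show (1 + e₁₁) * (1 + e₂₂) = 1 + e₁₂ * e₂₁ by linarith]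
      linarith [abs_add_le 1 (e₁₂ * e₂₁), abs_one (α := ℝ)]
    nlinarith [abs_nonneg (1 + e₁₁)]
  have hrhs : |(1 + e₂₂) * a| ≤ 23 / 12 * S := by
    rw [show (1 + e₂₂) * a = e₂₁ * b + e₁₂ * c - (1 + e₁₁) * d by linarith]
    calc |e₂₁ * b + e₁₂ * c - (1 + e₁₁) * d|
        ≤ |e₂₁| * |b| + |e₁₂| * |c| + |1 + e₁₁| * |d| := by
          rw [← abs_mul, ← abs_mul, ← abs_mul]
          linarith [abs_sub (e₂₁ * b + e₁₂ * c) ((1 + e₁₁) * d),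
            abs_add_le (e₂₁ * b) (e₁₂ * c)]
      _ ≤ 1 / 4 * S + 1 / 4 * S + 17 / 12 * S := by gcongr
      _ = 23 / 12 * S := by ring
  rw [abs_mul] at hrhs
  nlinarith [abs_nonneg a, abs_nonneg b]

theorem sqrt_sq_add_sq_le_abs_add_abs (a b : ℝ) : √(a ^ 2 + b ^ 2) ≤ |a| + |b| :=
  Real.sqrt_le_iff.2
    ⟨by positivity, by nlinarith [sq_abs a, sq_abs b, abs_nonneg a, abs_nonneg b]⟩

/-- there are constants `δ ∈ (0,1]`, `c₀ > 0` such that for all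
smooth 2-periodic maps `η, u`, both satisfying the odevity conditions, with
`det(I + ∇η) = 1`, `‖∂₂η‖₂ ≤ δ` and `div_𝒜 u = 0` (where `𝒜 = (∇(η + id))^{-T}`),
one has `‖∂₁u‖_{L^∞} ≤ c₀‖∂₂u‖₂` and `‖∂₂u‖_{L^∞} ≤ c₀‖∂₂²u‖₁` on the periodic cell. -/
theorem statement14 :
    ∃ δ c₀ : ℝ, 0 < δ ∧ δ ≤ 1 ∧ 0 < c₀ ∧
      ∀ η u : Pt → Pt, ContDiff ℝ (⊤ : ℕ∞) η → ContDiff ℝ (⊤ : ℕ∞) u →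
        Periodic2 (comp1 η) → Periodic2 (comp2 η) →
        Periodic2 (comp1 u) → Periodic2 (comp2 u) →
        Odev η → Odev u → DetCond η → DivACond η u →
        sobV 2 (d2V η) ≤ δ →
        ∀ y ∈ cell,
          Real.sqrt ((p1 (comp1 u) y) ^ 2 + (p1 (comp2 u) y) ^ 2)
              ≤ c₀ * sobV 2 (d2V u) ∧
          Real.sqrt ((p2 (comp1 u) y) ^ 2 + (p2 (comp2 u) y) ^ 2)
              ≤ c₀ * sobV 1 (d2V (d2V u)) := by
  refine ⟨1 / 12, 12, by norm_num, by norm_num, by norm_num, ?_⟩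
  intro η u hη hu _ hpη _ hpu hoη hou hdet hdiv hδ y hy
  have hη3 : ContDiff ℝ 3 η := hη.of_le (WithTop.coe_le_coe.2 le_top)
  have hu3 : ContDiff ℝ 3 u := hu.of_le (WithTop.coe_le_coe.2 le_top)
  have hsmall {e : ℝ} (he : |e| ≤ 3 * sobV 2 (d2V η)) : |e| ≤ 1 / 4 := by linarith
  have hp1u1 := abs_le_of_cofactor_eq_zero (hsmall (hoη.abs_p2_comp1_le hη3 hy))
    (hsmall (hoη.abs_p1_comp2_le hη3 hy)) (hsmall (hoη.abs_p2_comp2_le hpη hη3 hy))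
    (hou.abs_p2_comp1_le hu3 hy) (hou.abs_p1_comp2_le hu3 hy)
    (hou.abs_p2_comp2_le hpu hu3 hy) (hdet y) (hdiv y)
  constructor
  · calc √(p1 (comp1 u) y ^ 2 + p1 (comp2 u) y ^ 2)
        ≤ |p1 (comp1 u) y| + |p1 (comp2 u) y| := sqrt_sq_add_sq_le_abs_add_abs _ _
      _ ≤ 12 * sobV 2 (d2V u) := by linarith [hou.abs_p1_comp2_le hu3 hy]
  · calc √(p2 (comp1 u) y ^ 2 + p2 (comp2 u) y ^ 2)
        ≤ |p2 (comp1 u) y| + |p2 (comp2 u) y| := sqrt_sq_add_sq_le_abs_add_abs _ _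
      _ ≤ 12 * sobV 1 (d2V (d2V u)) := by
          have hS : 0 ≤ sobV 1 (d2V (d2V u)) := Real.sqrt_nonneg _
          linarith [hou.abs_p2_comp1_le_sobV_one hu3 hy, hou.abs_p2_comp2_le_sobV_one hpu hu3 hy]
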